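/- For any squarefree positive integer n and real κ ≥ 0 (with the convention 0^0 = 1), one has ((μ ⋆ (L·τ_{1+κ}))(n) = (log n)·κ^{ω(n)} + (log n)·κ^{ω(n)−1}, where ω(n) is the number of distinct prime divisors of n. -/

import Mathlib

/-!
Logarithmic multiplication `L·` is a derivation of Dirichlet convolution, so writing
`f = ζ ⋆ (μ ⋆ f)` gives `μ ⋆ (L·f) = Λ ⋆ (μ ⋆ f) + L·(μ ⋆ f)`. On squarefree arguments
`τ_{1+κ} = (1+κ)^ω`, hence `μ ⋆ τ_{1+κ} = κ^ω` there, and since a squarefree `n` has only primes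
as prime-power divisors, `(Λ ⋆ κ^ω)(n) = Σ_{p ∣ n} log p · κ^{ω(n)-1} = log n · κ^{ω(n)-1}`.
-/

open ArithmeticFunction

/-- The divisor-type function `τ_r`, multiplicative with `τ_r(p^m) = Γ(r+m)/(Γ(r)·m!)`. -/
noncomputable def tauR (r : ℝ) : ArithmeticFunction ℝ :=
  ⟨fun n => if n = 0 then 0 else ∏ p ∈ n.primeFactors,
      Real.Gamma (r + (n.factorization p : ℝ)) /
        (Real.Gamma r * Nat.factorial (n.factorization p)),
    by simp⟩

/-- The Möbius function, real-valued. -/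
noncomputable def muR : ArithmeticFunction ℝ :=
  ((moebius : ArithmeticFunction ℤ) : ArithmeticFunction ℝ)

/-- The constant-one function (on `n ≥ 1`), real-valued. -/
noncomputable def zetaR : ArithmeticFunction ℝ :=
  ((zeta : ArithmeticFunction ℕ) : ArithmeticFunction ℝ)

open scoped ArithmeticFunction.Moebius ArithmeticFunction.omega
  ArithmeticFunction.zeta

namespace ArithmeticFunction

theorem card_primeFactors_eq_cardDistinctFactors (n : ℕ) : n.primeFactors.card = ω n := by
  rw [cardDistinctFactors_apply, Nat.primeFactors, List.card_toFinset]

theorem mul_apply_congr_right {R : Type*} [Semiring R] (f : ArithmeticFunction R)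
    {g h : ArithmeticFunction R} {n : ℕ} (hgh : ∀ d ∈ n.divisors, g d = h d) :
    (f * g) n = (f * h) n := by
  simp only [mul_apply]
  exact Finset.sum_congr rfl fun x hx => by
    rw [hgh x.2 (Nat.snd_mem_divisors_of_mem_antidiagonal hx)]

theorem pmul_log_mul (f g : ArithmeticFunction ℝ) :
    log.pmul (f * g) = log.pmul f * g + f * log.pmul g := by
  ext n
  rcases eq_or_ne n 0 with rfl | hn
  · simp
  simp only [pmul_apply, log_apply, add_apply, mul_apply, Finset.mul_sum,
    ← Finset.sum_add_distrib]
  refine Finset.sum_congr rfl fun x hx => ?_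
  obtain ⟨rfl, -⟩ := Nat.mem_divisorsAntidiagonal.mp hx
  have h1 : (x.1 : ℝ) ≠ 0 := by exact_mod_cast left_ne_zero_of_mul hn
  have h2 : (x.2 : ℝ) ≠ 0 := by exact_mod_cast right_ne_zero_of_mul hn
  rw [Nat.cast_mul, Real.log_mul h1 h2]
  ring

theorem moebius_mul_pmul_log (f : ArithmeticFunction ℝ) :
    (μ : ArithmeticFunction ℝ) * log.pmul f = Λ * (μ * f) + log.pmul (μ * f) := by
  conv_lhs => rw [← one_mul f, ← coe_zeta_mul_coe_moebius, mul_assoc, pmul_log_mul,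
    pmul_zeta]
  rw [mul_add, ← mul_assoc, ← mul_assoc _ (ζ : ArithmeticFunction ℝ), mul_comm _ log,
    log_mul_moebius_eq_vonMangoldt, coe_moebius_mul_coe_zeta, one_mul]

theorem vonMangoldt_mul_apply_of_squarefree {n : ℕ} (hn : Squarefree n)
    {g : ArithmeticFunction ℝ} {x : ℝ} (hg : ∀ d ∈ n.divisors, g d = x ^ ω d) :
    (Λ * g) n = Real.log n * x ^ (ω n - 1) := by
  rw [mul_apply, Nat.sum_divisorsAntidiagonal (Λ · * g ·), ← vonMangoldt_sum, Finset.sum_mul]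
  refine Finset.sum_congr rfl fun d hd => ?_
  by_cases hΛ : Λ d = 0
  · simp [hΛ]
  have hdn : d ∣ n := Nat.dvd_of_mem_divisors hd
  have hp : d.Prime := Nat.squarefree_and_prime_pow_iff_prime.mp
    ⟨hn.squarefree_of_dvd hdn, vonMangoldt_ne_zero_iff.mp hΛ⟩
  obtain ⟨m, rfl⟩ := hdn
  have hcop : d.Coprime m := Nat.coprime_of_squarefree_mul hn
  rw [Nat.mul_div_cancel_left m hp.pos,
    hg m (Nat.mem_divisors.mpr ⟨Dvd.intro_left d rfl, hn.ne_zero⟩), cardDistinctFactors_mul hcop,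
    cardDistinctFactors_apply_prime hp, Nat.add_sub_cancel_left]

end ArithmeticFunction

theorem tauR_apply_of_squarefree {r : ℝ} (hr : ∀ m : ℕ, r ≠ -m) {d : ℕ} (hd : Squarefree d) :
    tauR r d = r ^ ω d := by
  have hΓ : Real.Gamma (r + 1) / (Real.Gamma r * 1) = r := by
    rw [Real.Gamma_add_one (by simpa using hr 0), mul_one,
      mul_div_cancel_right₀ _ (Real.Gamma_ne_zero hr)]
  show (if d = 0 then 0 else _) = _
  rw [if_neg hd.ne_zero, ← card_primeFactors_eq_cardDistinctFactors, ← Finset.prod_const]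
  refine Finset.prod_congr rfl fun p hp => ?_
  rw [Nat.factorization_eq_one_of_squarefree hd (Nat.prime_of_mem_primeFactors hp)
    (Nat.dvd_of_mem_primeFactors hp)]
  simpa using hΓ

theorem moebius_mul_tauR_apply_of_squarefree {r : ℝ} (hr : ∀ m : ℕ, r ≠ -m) {d : ℕ}
    (hd : Squarefree d) : ((μ : ArithmeticFunction ℝ) * tauR r) d = (r - 1) ^ ω d := by
  have hτ : ∀ e ∈ d.divisors, tauR r e = (prodPrimeFactors fun _ ↦ r) e := fun e he => by
    have he : Squarefree e := hd.squarefree_of_dvd (Nat.dvd_of_mem_divisors he)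
    rw [tauR_apply_of_squarefree hr he, prodPrimeFactors_apply he.ne_zero, Finset.prod_const,
      card_primeFactors_eq_cardDistinctFactors]
  rw [mul_apply_congr_right _ hτ,
    ← isMultiplicative_moebius.intCast.prodPrimeFactors_add_of_squarefree
      (IsMultiplicative.prodPrimeFactors _) hd,
    prodPrimeFactors_apply hd.ne_zero, ← card_primeFactors_eq_cardDistinctFactors,
    ← Finset.prod_const]
  refine Finset.prod_congr rfl fun p hp => ?_
  have hp : p.Prime := Nat.prime_of_mem_primeFactors hp
  rw [ArithmeticFunction.add_apply, intCoe_apply, moebius_apply_prime hp,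
    prodPrimeFactors_apply hp.ne_zero, hp.primeFactors, Finset.prod_singleton]
  push_cast
  ring

theorem stmt3 (n : ℕ) (hn : Squarefree n) (κ : ℝ) (hκ : 0 ≤ κ) :
    (muR * log.pmul (tauR (1 + κ))) n
      = Real.log n * κ ^ (cardDistinctFactors n) +
        Real.log n * κ ^ (cardDistinctFactors n - 1) := by
  have hr : ∀ m : ℕ, 1 + κ ≠ -m := fun m => by linarith [(m.cast_nonneg : (0 : ℝ) ≤ m)]
  have hμτ : ∀ d ∈ n.divisors, ((μ : ArithmeticFunction ℝ) * tauR (1 + κ)) d = κ ^ ω d :=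
    fun d hd => by
      rw [moebius_mul_tauR_apply_of_squarefree hr
        (hn.squarefree_of_dvd (Nat.dvd_of_mem_divisors hd)), add_sub_cancel_left]
  rw [muR, moebius_mul_pmul_log, ArithmeticFunction.add_apply,
    vonMangoldt_mul_apply_of_squarefree hn hμτ, pmul_apply, log_apply,
    hμτ n (Nat.mem_divisors_self n hn.ne_zero)]
  ring
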